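/- Let G be a real m×n matrix satisfying the restricted isometry property of order S with constant δ_S ∈ (0,1). Let G' be the (m-1)×n matrix obtained by deleting the j-th row of G, and set δ' = δ_S + S·max_i G_{j,i}². Then for every S-sparse z ∈ ℝ^n, (1-δ')‖z‖₂² ≤ ‖G' z‖₂² ≤ (1+δ')‖z‖₂². -/

import Mathlib

/-! Deleting row `j` removes the term `(G z)_j ^ 2` from `‖G z‖²`. If `z` is supported on a set
`s` with `#s ≤ S`, Cauchy–Schwarz on `s` gives
`(G z)_j ^ 2 ≤ (∑ i ∈ s, G_{j,i} ^ 2) ‖z‖² ≤ S (max_i G_{j,i} ^ 2) ‖z‖²`,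
so the lower RIP constant worsens by at most `S max_i G_{j,i} ^ 2`, while the upper one can only
improve. -/

open Finset Matrix

theorem sq_dotProduct_le_card_support_mul_iSup {ι : Type*} [Fintype ι] (a z : ι → ℝ) :
    (a ⬝ᵥ z) ^ 2 ≤ #{i | z i ≠ 0} * (⨆ i, a i ^ 2) * ∑ i, z i ^ 2 := by
  set s : Finset ι := {i | z i ≠ 0}
  set M := ⨆ i, a i ^ 2
  have hM : ∀ i, a i ^ 2 ≤ M := le_ciSup (Set.finite_range _).bddAbove
  have hdot : a ⬝ᵥ z = ∑ i ∈ s, a i * z i :=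
    (sum_filter_of_ne fun i _ (h : a i * z i ≠ 0) => right_ne_zero_of_mul h).symm
  have hsum_a : ∑ i ∈ s, a i ^ 2 ≤ #s * M := by
    simpa using sum_le_card_nsmul s (fun i => a i ^ 2) M fun i _ => hM i
  have hsum_z : ∑ i ∈ s, z i ^ 2 ≤ ∑ i, z i ^ 2 :=
    sum_le_sum_of_subset_of_nonneg (subset_univ s) fun i _ _ => sq_nonneg _
  calc (a ⬝ᵥ z) ^ 2 ≤ (∑ i ∈ s, a i ^ 2) * ∑ i ∈ s, z i ^ 2 :=
        hdot ▸ sum_mul_sq_le_sq_mul_sq s a z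
    _ ≤ #s * M * ∑ i, z i ^ 2 :=
      mul_le_mul hsum_a hsum_z (by positivity)
        (mul_nonneg (Nat.cast_nonneg _) (Real.iSup_nonneg fun i => sq_nonneg _))

theorem sum_sq_mulVec_eq_add_sum_sq_mulVec_succAbove {m n : ℕ}
    (G : Matrix (Fin (m + 1)) (Fin n) ℝ) (j : Fin (m + 1)) (z : Fin n → ℝ) :
    ∑ i, (G *ᵥ z) i ^ 2 =
      (G *ᵥ z) j ^ 2 + ∑ l, ((Matrix.of fun l i => G (j.succAbove l) i) *ᵥ z) l ^ 2 :=
  Fin.sum_univ_succAbove _ j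

open Finset in
theorem stmt_5_general {m n : ℕ} (G : Matrix (Fin (m + 1)) (Fin n) ℝ) (S : ℕ) (δ : ℝ)
    (hRIP : ∀ z : Fin n → ℝ,
      (Finset.univ.filter fun i => z i ≠ 0).card ≤ S →
      (1 - δ) * ∑ i, z i ^ 2 ≤ ∑ i, (G.mulVec z i) ^ 2 ∧
      ∑ i, (G.mulVec z i) ^ 2 ≤ (1 + δ) * ∑ i, z i ^ 2)
    (j : Fin (m + 1)) (δ' : ℝ) (hδ' : δ' = δ + S * ⨆ i : Fin n, (G j i) ^ 2) :
    ∀ z : Fin n → ℝ,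
      (Finset.univ.filter fun i => z i ≠ 0).card ≤ S →
      (1 - δ') * ∑ i, z i ^ 2 ≤
          ∑ i, ((Matrix.of fun l i' => G (j.succAbove l) i').mulVec z i) ^ 2 ∧
      ∑ i, ((Matrix.of fun l i' => G (j.succAbove l) i').mulVec z i) ^ 2 ≤
          (1 + δ') * ∑ i, z i ^ 2 := by
  intro z hz
  obtain ⟨hlower, hupper⟩ := hRIP z hz
  have hsplit := sum_sq_mulVec_eq_add_sum_sq_mulVec_succAbove G j z
  have hrow : (G *ᵥ z) j ^ 2 ≤ S * (⨆ i, G j i ^ 2) * ∑ i, z i ^ 2 := by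
    refine (sq_dotProduct_le_card_support_mul_iSup (G j) z).trans ?_
    gcongr
    exact Real.iSup_nonneg fun i => sq_nonneg _
  subst hδ'
  constructor
  · linarith
  · linarith [sq_nonneg ((G *ᵥ z) j)]

open Finset in
theorem stmt_5 {m n : ℕ} (G : Matrix (Fin (m + 1)) (Fin n) ℝ) (S : ℕ) (δ : ℝ)
    (hδ : δ ∈ Set.Ioo (0 : ℝ) 1)
    (hRIP : ∀ z : Fin n → ℝ,
      (Finset.univ.filter fun i => z i ≠ 0).card ≤ S →
      (1 - δ) * ∑ i, z i ^ 2 ≤ ∑ i, (G.mulVec z i) ^ 2 ∧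
      ∑ i, (G.mulVec z i) ^ 2 ≤ (1 + δ) * ∑ i, z i ^ 2)
    (j : Fin (m + 1)) (δ' : ℝ) (hδ' : δ' = δ + S * ⨆ i : Fin n, (G j i) ^ 2) :
    ∀ z : Fin n → ℝ,
      (Finset.univ.filter fun i => z i ≠ 0).card ≤ S →
      (1 - δ') * ∑ i, z i ^ 2 ≤
          ∑ i, ((Matrix.of fun l i' => G (j.succAbove l) i').mulVec z i) ^ 2 ∧
      ∑ i, ((Matrix.of fun l i' => G (j.succAbove l) i').mulVec z i) ^ 2 ≤
          (1 + δ') * ∑ i, z i ^ 2 :=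
  stmt_5_general G S δ hRIP j δ' hδ'
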